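/- Let A be an n×n real symmetric matrix with eigenvalues λ_1 ≥ ⋯ ≥ λ_n and orthonormal eigenvectors u_1, …, u_n, let E be an n×n real symmetric matrix, let 1 ≤ k < n with δ_k := λ_k − λ_{k+1} > 0 and λ_k + λ_{k+1} ≥ 0, set a_0 := λ_k − δ_k/2, and let T ≥ δ_k. Let 1 ≤ r₁ ≤ n and x₁ := max_{1≤i,j≤r₁} |u_iᵀ E u_j|. Then ∫_{−T}^{T} ‖ Σ_{1≤i,j≤r₁} ((a_0 + it)/((a_0 + it − λ_i)(a_0 + it − λ_j))) · u_i u_iᵀ E u_j u_jᵀ ‖ dt ≤ r₁² x₁ · ( 2π a_0/δ_k + 2 log(3T/δ_k) ). -/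

import Mathlib

/-!
Since `a₀` is the midpoint of the gap `(λ_{k+1}, λ_k)`, every eigenvalue satisfies
`|a₀ - λᵢ| ≥ δ_k / 2`, so on the line `z = a₀ + it` each coefficient `z / ((z - λᵢ)(z - λⱼ))`
has modulus at most `(a₀ + |t|) / ((δ_k/2)² + t²)`. Each block
`uᵢuᵢᵀ E uⱼuⱼᵀ = (uᵢᵀ E uⱼ) uᵢuⱼᵀ` is a multiple of a rank-one matrix of unit vectors, so its
spectral norm is `|uᵢᵀ E uⱼ| ≤ x₁`. The resulting bound integrates exactly, with antiderivative
`(2a₀/δ) arctan (2t/δ) + ½ log ((δ/2)² + t²)` on `t ≥ 0`; then `arctan < π/2` and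
`1 + 4T²/δ² ≤ 9T²/δ²` for `T ≥ δ` give the claim.
-/

open Matrix Real

/-- The spectral norm (operator norm induced by the Euclidean norm) of a complex matrix. -/
noncomputable def specNormC {n : ℕ} (M : Matrix (Fin n) (Fin n) ℂ) : ℝ :=
  ‖Matrix.toEuclideanCLM (𝕜 := ℂ) M‖

open Finset
open scoped Matrix.Norms.L2Operator

theorem half_sub_le_abs_midpoint_sub {a b x : ℝ} (h : a ≤ x ∨ x ≤ b) :
    (a - b) / 2 ≤ |(a + b) / 2 - x| := by
  rcases h with h | h
  · rw [abs_sub_comm]; exact (by linarith : (a - b) / 2 ≤ x - (a + b) / 2).trans (le_abs_self _)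
  · exact (by linarith : (a - b) / 2 ≤ (a + b) / 2 - x).trans (le_abs_self _)

namespace Complex

theorem sq_add_im_sq_le_norm_sub_ofReal_sq {z : ℂ} {a c : ℝ} (hc : 0 ≤ c)
    (h : c ≤ |z.re - a|) : c ^ 2 + z.im ^ 2 ≤ ‖z - a‖ ^ 2 := by
  rw [← normSq_eq_norm_sq, normSq_apply, sub_re, sub_im, ofReal_re, ofReal_im, sub_zero]
  nlinarith [sq_abs (z.re - a)]

theorem norm_div_mul_sub_ofReal_le {z : ℂ} {a b c : ℝ} (hc : 0 < c) (ha : c ≤ |z.re - a|)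
    (hb : c ≤ |z.re - b|) : ‖z / ((z - a) * (z - b))‖ ≤ ‖z‖ / (c ^ 2 + z.im ^ 2) := by
  have hden : c ^ 2 + z.im ^ 2 ≤ ‖(z - a) * (z - b)‖ := by
    rw [norm_mul]
    refine (pow_le_pow_iff_left₀ (by positivity) (by positivity) two_ne_zero).1 ?_
    rw [mul_pow, sq (c ^ 2 + z.im ^ 2)]
    exact mul_le_mul (sq_add_im_sq_le_norm_sub_ofReal_sq hc.le ha)
      (sq_add_im_sq_le_norm_sub_ofReal_sq hc.le hb) (by positivity) (by positivity)
  rw [norm_div]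
  exact div_le_div_of_nonneg_left (norm_nonneg _) (by positivity) hden

end Complex

theorem norm_sum_sum_smul_le {ι 𝕜 V : Type*} [NormedField 𝕜] [SeminormedAddCommGroup V]
    [NormedSpace 𝕜 V] (s : Finset ι) (c : ι → ι → 𝕜) (M : ι → ι → V) {B x : ℝ}
    (hB : 0 ≤ B) (hc : ∀ i ∈ s, ∀ j ∈ s, ‖c i j‖ ≤ B) (hM : ∀ i ∈ s, ∀ j ∈ s, ‖M i j‖ ≤ x) :
    ‖∑ i ∈ s, ∑ j ∈ s, c i j • M i j‖ ≤ #s ^ 2 * (B * x) := by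
  have hterm : ∀ i ∈ s, ∀ j ∈ s, ‖c i j • M i j‖ ≤ B * x := fun i hi j hj =>
    (norm_smul_le _ _).trans (mul_le_mul (hc i hi j hj) (hM i hi j hj) (norm_nonneg _) hB)
  calc ‖∑ i ∈ s, ∑ j ∈ s, c i j • M i j‖ ≤ ∑ i ∈ s, ∑ j ∈ s, B * x :=
        norm_sum_le_of_le _ fun i hi => norm_sum_le_of_le _ (hterm i hi)
    _ = #s ^ 2 * (B * x) := by simp only [sum_const, nsmul_eq_mul]; ring

theorem EuclideanSpace.norm_toLp_ofReal {m : Type*} [Fintype m] (v : m → ℝ) :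
    ‖(WithLp.toLp 2 fun i => (v i : ℂ) : EuclideanSpace ℂ m)‖ = √(v ⬝ᵥ v) := by
  simp [EuclideanSpace.norm_eq, dotProduct, ← sq]

namespace Matrix

theorem l2_opNorm_vecMulVec {𝕜 m n : Type*} [RCLike 𝕜] [Fintype m] [Fintype n] [DecidableEq n]
    (x : EuclideanSpace 𝕜 m) (y : EuclideanSpace 𝕜 n) :
    ‖vecMulVec x.ofLp (star y.ofLp)‖ = ‖x‖ * ‖y‖ := by
  rw [← InnerProductSpace.norm_rankOne (𝕜 := 𝕜) x y,
    ← InnerProductSpace.symm_toEuclideanLin_rankOne x y, l2_opNorm_def, LinearEquiv.trans_apply,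
    LinearEquiv.apply_symm_apply]
  rfl

theorem l2_opNorm_map_ofReal_vecMulVec {m n : Type*} [Fintype m] [Fintype n] [DecidableEq n]
    (v : m → ℝ) (w : n → ℝ) :
    ‖(vecMulVec v w).map ((↑) : ℝ → ℂ)‖ = √(v ⬝ᵥ v) * √(w ⬝ᵥ w) := by
  rw [← EuclideanSpace.norm_toLp_ofReal, ← EuclideanSpace.norm_toLp_ofReal,
    ← l2_opNorm_vecMulVec]
  congr 1
  ext i j
  simp [vecMulVec_apply]

theorem vecMulVec_self_mul_mul_vecMulVec_self {α m n : Type*} [CommSemiring α] [Fintype m]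
    [Fintype n] (v : m → α) (w : n → α) (E : Matrix m n α) :
    vecMulVec v v * E * vecMulVec w w = (v ⬝ᵥ E *ᵥ w) • vecMulVec v w := by
  rw [Matrix.mul_assoc, mul_vecMulVec, vecMulVec_mul_vecMulVec, vecMulVec_smul]

theorem l2_opNorm_map_ofReal_vecMulVec_self_mul_mul_vecMulVec_self {m n : Type*} [Fintype m]
    [Fintype n] [DecidableEq n] {v : m → ℝ} {w : n → ℝ} (hv : v ⬝ᵥ v = 1) (hw : w ⬝ᵥ w = 1)
    (E : Matrix m n ℝ) :
    ‖(vecMulVec v v * E * vecMulVec w w).map ((↑) : ℝ → ℂ)‖ = |v ⬝ᵥ E *ᵥ w| := by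
  rw [vecMulVec_self_mul_mul_vecMulVec_self,
    Matrix.map_smulₛₗ _ ((↑) : ℝ → ℂ) _ fun _ => Complex.ofReal_mul _ _, norm_smul,
    Complex.norm_real, l2_opNorm_map_ofReal_vecMulVec, hv, hw]
  simp

end Matrix

theorem intervalIntegral.integral_mono_of_nonneg {f g : ℝ → ℝ} {μ : MeasureTheory.Measure ℝ}
    {a b : ℝ} (hab : a ≤ b) (hf : ∀ t, 0 ≤ f t) (hg : IntervalIntegrable g μ a b)
    (hfg : ∀ t, f t ≤ g t) : ∫ t in a..b, f t ∂μ ≤ ∫ t in a..b, g t ∂μ := by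
  rw [intervalIntegral.integral_of_le hab, intervalIntegral.integral_of_le hab]
  exact MeasureTheory.integral_mono_of_nonneg (.of_forall hf) hg.1 (.of_forall hfg)

theorem hasDerivAt_arctan_div_add_log_sq_add_sq (a : ℝ) {c : ℝ} (hc : c ≠ 0) (t : ℝ) :
    HasDerivAt (fun s => a / c * arctan (s / c) + log (c ^ 2 + s ^ 2) / 2)
      ((a + t) / (c ^ 2 + t ^ 2)) t := by
  have hpos : 0 < c ^ 2 + t ^ 2 := by positivity
  have harctan := (((hasDerivAt_id' t).div_const c).arctan).const_mul (a / c)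
  have hlog := (((hasDerivAt_pow 2 t).const_add (c ^ 2)).log hpos.ne').div_const 2
  refine (harctan.fun_add hlog).congr_deriv ?_
  field_simp
  ring

theorem integral_add_div_sq_add_sq (a : ℝ) {c : ℝ} (hc : c ≠ 0) (T : ℝ) :
    ∫ t in (0 : ℝ)..T, (a + t) / (c ^ 2 + t ^ 2)
      = a / c * arctan (T / c) + log ((c ^ 2 + T ^ 2) / c ^ 2) / 2 := by
  rw [intervalIntegral.integral_eq_sub_of_hasDerivAt
    (fun t _ => hasDerivAt_arctan_div_add_log_sq_add_sq a hc t)]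
  · rw [log_div (by positivity) (by positivity), zero_div, arctan_zero, zero_pow two_ne_zero,
      add_zero]
    ring
  · exact (Continuous.div (by fun_prop) (by fun_prop) fun t => by positivity).intervalIntegrable _ _

theorem intervalIntegral.integral_symm_of_even {f : ℝ → ℝ} (hf : Continuous f)
    (heven : ∀ t, f (-t) = f t) (T : ℝ) :
    ∫ t in (-T)..T, f t = 2 * ∫ t in (0 : ℝ)..T, f t := by
  have hleft : ∫ t in (-T)..0, f t = ∫ t in (0 : ℝ)..T, f t := by
    simpa [heven] using (intervalIntegral.integral_comp_neg (a := 0) (b := T) f).symm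
  rw [← intervalIntegral.integral_add_adjacent_intervals (hf.intervalIntegrable _ 0)
    (hf.intervalIntegrable 0 _), hleft, two_mul]

theorem continuous_add_abs_div_sq_add_sq (a : ℝ) {c : ℝ} (hc : c ≠ 0) :
    Continuous fun t : ℝ => (a + |t|) / (c ^ 2 + t ^ 2) :=
  Continuous.div (by fun_prop) (by fun_prop) fun t => by positivity

theorem integral_add_abs_div_sq_add_sq (a : ℝ) {c : ℝ} (hc : c ≠ 0) {T : ℝ} (hT : 0 ≤ T) :
    ∫ t in (-T)..T, (a + |t|) / (c ^ 2 + t ^ 2)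
      = 2 * (a / c * arctan (T / c)) + log ((c ^ 2 + T ^ 2) / c ^ 2) := by
  rw [intervalIntegral.integral_symm_of_even (continuous_add_abs_div_sq_add_sq a hc) (by simp),
    intervalIntegral.integral_congr (g := fun t => (a + t) / (c ^ 2 + t ^ 2)) fun t ht => ?_,
    integral_add_div_sq_add_sq a hc]
  · ring
  · rw [Set.uIcc_of_le hT] at ht
    simp only [abs_of_nonneg ht.1]

theorem integral_add_abs_div_sq_add_sq_le {a δ T : ℝ} (ha : 0 ≤ a) (hδ : 0 < δ) (hT : δ ≤ T) :
    ∫ t in (-T)..T, (a + |t|) / ((δ / 2) ^ 2 + t ^ 2) ≤ 2 * π * a / δ + 2 * log (3 * T / δ) := by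
  rw [integral_add_abs_div_sq_add_sq a (by positivity) (hδ.le.trans hT)]
  have harctan : 2 * (a / (δ / 2) * arctan (T / (δ / 2))) ≤ 2 * π * a / δ := by
    calc 2 * (a / (δ / 2) * arctan (T / (δ / 2))) ≤ 2 * (a / (δ / 2) * (π / 2)) := by
          gcongr; exact (arctan_lt_pi_div_two _).le
      _ = 2 * π * a / δ := by field_simp
  have hlog : log (((δ / 2) ^ 2 + T ^ 2) / (δ / 2) ^ 2) ≤ 2 * log (3 * T / δ) := by
    rw [show 2 * log (3 * T / δ) = log ((3 * T / δ) ^ 2) by rw [log_pow]; norm_num]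
    apply log_le_log (by positivity)
    rw [div_le_iff₀ (by positivity)]
    field_simp
    nlinarith
  linarith

theorem l2_opNorm_sum_sum_resolvent_smul_le {ι m : Type*} [Fintype m] [DecidableEq m]
    (s : Finset ι) (E : Matrix m m ℝ) (lam : ι → ℝ) {u : ι → m → ℝ}
    (hu : ∀ i, u i ⬝ᵥ u i = 1) {c x : ℝ} (hc : 0 < c)
    (hx : ∀ i ∈ s, ∀ j ∈ s, |u i ⬝ᵥ E *ᵥ u j| ≤ x) {z : ℂ} (hz : ∀ i, c ≤ |z.re - lam i|) :
    ‖∑ i ∈ s, ∑ j ∈ s, (z / ((z - lam i) * (z - lam j))) •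
        (vecMulVec (u i) (u i) * E * vecMulVec (u j) (u j)).map ((↑) : ℝ → ℂ)‖
      ≤ #s ^ 2 * (‖z‖ / (c ^ 2 + z.im ^ 2) * x) :=
  norm_sum_sum_smul_le s _ _ (by positivity)
    (fun i _ j _ => Complex.norm_div_mul_sub_ofReal_le hc (hz i) (hz j))
    (fun i hi j hj => (l2_opNorm_map_ofReal_vecMulVec_self_mul_mul_vecMulVec_self
      (hu i) (hu j) E).trans_le (hx i hi j hj))

theorem l2_opNorm_sum_sum_resolvent_smul_le_of_re_eq {ι m : Type*} [Fintype m] [DecidableEq m]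
    (s : Finset ι) (E : Matrix m m ℝ) (lam : ι → ℝ) {u : ι → m → ℝ}
    (hu : ∀ i, u i ⬝ᵥ u i = 1) {a c x : ℝ} (ha : 0 ≤ a) (hc : 0 < c) (hx₀ : 0 ≤ x)
    (hx : ∀ i ∈ s, ∀ j ∈ s, |u i ⬝ᵥ E *ᵥ u j| ≤ x) (hgap : ∀ i, c ≤ |a - lam i|) (t : ℝ) :
    ‖∑ i ∈ s, ∑ j ∈ s,
        (((a : ℂ) + t * Complex.I) / (((a : ℂ) + t * Complex.I - lam i) *
          ((a : ℂ) + t * Complex.I - lam j))) •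
        (vecMulVec (u i) (u i) * E * vecMulVec (u j) (u j)).map ((↑) : ℝ → ℂ)‖
      ≤ #s ^ 2 * x * ((a + |t|) / (c ^ 2 + t ^ 2)) := by
  have hre : ((a : ℂ) + t * Complex.I).re = a := by simp
  have him : ((a : ℂ) + t * Complex.I).im = t := by simp
  have hnorm : ‖(a : ℂ) + t * Complex.I‖ ≤ a + |t| :=
    (Complex.norm_le_abs_re_add_abs_im _).trans_eq (by rw [hre, him, abs_of_nonneg ha])
  refine (l2_opNorm_sum_sum_resolvent_smul_le s E lam hu hc hx
    fun i => by rw [hre]; exact hgap i).trans ?_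
  rw [him, mul_assoc, mul_comm x]
  gcongr

theorem specNormC_eq_l2_opNorm {n : ℕ} (M : Matrix (Fin n) (Fin n) ℂ) : specNormC M = ‖M‖ := rfl

/-- Integral of the top-block interaction term along the left vertical
segment: with `a₀ = λ_k − δ_k/2` (the midpoint of `λ_k, λ_{k+1}`), `T ≥ δ_k`, and
`x₁ = max_{1≤i,j≤r₁} |uᵢᵀ E uⱼ|`,
`∫_{−T}^{T} ‖Σ_{i,j≤r₁} (z/((z−λᵢ)(z−λⱼ))) uᵢuᵢᵀ E uⱼuⱼᵀ‖ dt
  ≤ r₁² x₁ (2π a₀/δ_k + 2 log(3T/δ_k))` where `z = a₀ + it`.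
Indices are 1-based in the informal statement; `lam ⟨i-1, _⟩` is `λ_i`. -/
theorem stmt15 (n k : ℕ) (hkn : k < n)
    (E : Matrix (Fin n) (Fin n) ℝ)
    -- spectral data of `A`
    (lam : Fin n → ℝ) (u : Fin n → (Fin n → ℝ))
    (hlam : ∀ i j : Fin n, i ≤ j → lam j ≤ lam i)
    (hu : ∀ i j : Fin n, u i ⬝ᵥ u j = if i = j then (1 : ℝ) else 0)
    -- the eigengap `δ_k` and midpoint `a₀`
    (δk : ℝ) (hδdef : δk = lam ⟨k - 1, by omega⟩ - lam ⟨k, hkn⟩)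
    (hδpos : 0 < δk)
    (hsum : 0 ≤ lam ⟨k - 1, by omega⟩ + lam ⟨k, hkn⟩)
    (a₀ : ℝ) (ha₀ : a₀ = lam ⟨k - 1, by omega⟩ - δk / 2)
    (T : ℝ) (hT : δk ≤ T)
    -- `r₁` and the interaction maximum `x₁`
    (r₁ : ℕ)
    (x₁ : ℝ)
    (hx₁_ub : ∀ i j : Fin n, (i : ℕ) < r₁ → (j : ℕ) < r₁ → |u i ⬝ᵥ E.mulVec (u j)| ≤ x₁)
    (hx₁_mem : ∃ i j : Fin n, (i : ℕ) < r₁ ∧ (j : ℕ) < r₁ ∧ |u i ⬝ᵥ E.mulVec (u j)| = x₁) :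
    (∫ t in (-T)..T,
        specNormC
          (∑ i ∈ Finset.univ.filter (fun i : Fin n => (i : ℕ) < r₁),
            ∑ j ∈ Finset.univ.filter (fun j : Fin n => (j : ℕ) < r₁),
              (((a₀ : ℂ) + (t : ℂ) * Complex.I) /
                  ((((a₀ : ℂ) + (t : ℂ) * Complex.I) - (lam i : ℂ)) *
                    (((a₀ : ℂ) + (t : ℂ) * Complex.I) - (lam j : ℂ)))) •
                ((vecMulVec (u i) (u i) * E * vecMulVec (u j) (u j)).map
                  (Complex.ofReal)))) ≤
      (r₁ : ℝ) ^ 2 * x₁ * (2 * π * a₀ / δk + 2 * Real.log (3 * T / δk)) := by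
  simp_rw [specNormC_eq_l2_opNorm]
  have hmid : a₀ = (lam ⟨k - 1, by omega⟩ + lam ⟨k, hkn⟩) / 2 := by linarith
  have hgap (i : Fin n) : δk / 2 ≤ |a₀ - lam i| := by
    rw [hmid, hδdef]
    refine half_sub_le_abs_midpoint_sub ?_
    rcases lt_or_ge (i : ℕ) k with hi | hi
    · exact .inl (hlam _ _ (Fin.le_def.2 (show (i : ℕ) ≤ k - 1 by omega)))
    · exact .inr (hlam _ _ (Fin.le_def.2 hi))
  have ha₀ : 0 ≤ a₀ := by linarith
  have hx₁ : 0 ≤ x₁ := by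
    obtain ⟨i, j, -, -, h⟩ := hx₁_mem
    exact h ▸ abs_nonneg _
  have hcard : #{i : Fin n | (i : ℕ) < r₁} ≤ r₁ :=
    Fin.card_filter_val_lt.trans_le (min_le_right _ _)
  calc _ ≤ ∫ t in (-T)..T, (r₁ : ℝ) ^ 2 * x₁ * ((a₀ + |t|) / ((δk / 2) ^ 2 + t ^ 2)) := by
        refine intervalIntegral.integral_mono_of_nonneg (by linarith) (fun _ => norm_nonneg _)
          ((continuous_const.mul (continuous_add_abs_div_sq_add_sq a₀
            (half_pos hδpos).ne')).intervalIntegrable _ _) fun t => ?_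
        refine (l2_opNorm_sum_sum_resolvent_smul_le_of_re_eq _ E lam (fun i => by simp [hu]) ha₀
          (half_pos hδpos) hx₁ (fun i hi j hj => hx₁_ub i j (by simpa using hi) (by simpa using hj))
          hgap t).trans ?_
        gcongr
    _ = (r₁ : ℝ) ^ 2 * x₁ * ∫ t in (-T)..T, (a₀ + |t|) / ((δk / 2) ^ 2 + t ^ 2) :=
        intervalIntegral.integral_const_mul _ _
    _ ≤ _ := by
        gcongr
        exact integral_add_abs_div_sq_add_sq_le ha₀ hδpos hT
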